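/- Let n and m be positive integers with 2^m > n!, let Γ₁ and Γ₂ be simple graphs on n vertices, let Γ be their disjoint union, and let H ≤ G = S_n ≀ S_2 be the subgroup of elements acting as automorphisms of Γ. Then for every c ∈ G^m, Γ₁ and Γ₂ are isomorphic if and only if the tensor product of coset states ψ_c satisfies ⟪ψ_c, P₁ ψ_c⟫ = 1. -/

import Mathlib

open scoped Classical

@[ext] structure Wr (n : ℕ) where
  fst : Equiv.Perm (Fin n)
  snd : Equiv.Perm (Fin n)
  bit : ZMod 2
  deriving DecidableEq, Fintype

namespace Wr

variable {n : ℕ}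

protected def mul (x y : Wr n) : Wr n :=
  ⟨if x.bit = 0 then x.fst * y.fst else x.fst * y.snd,
   if x.bit = 0 then x.snd * y.snd else x.snd * y.fst,
   x.bit + y.bit⟩

protected def inv (x : Wr n) : Wr n :=
  ⟨if x.bit = 0 then x.fst⁻¹ else x.snd⁻¹,
   if x.bit = 0 then x.snd⁻¹ else x.fst⁻¹,
   x.bit⟩

instance : Group (Wr n) where
  mul := Wr.mul
  one := ⟨1, 1, 0⟩
  inv := Wr.inv
  mul_assoc x y z := by
    show Wr.mul (Wr.mul x y) z = Wr.mul x (Wr.mul y z)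
    obtain ⟨a, b, c⟩ := x; obtain ⟨d, e, f⟩ := y; obtain ⟨g, h, i⟩ := z
    obtain rfl | rfl : c = 0 ∨ c = 1 := (by decide : ∀ j : ZMod 2, j = 0 ∨ j = 1) c <;> obtain rfl | rfl : f = 0 ∨ f = 1 := (by decide : ∀ j : ZMod 2, j = 0 ∨ j = 1) f <;>
      simp [Wr.mul, mul_assoc, show (1 : ZMod 2) ≠ 0 by decide,
        show (1 + 1 : ZMod 2) = 0 by decide, show ∀ j : ZMod 2, 1 + (1 + j) = j by decide]
  one_mul x := by
    show Wr.mul ⟨1, 1, 0⟩ x = x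
    simp [Wr.mul]
  mul_one x := by
    show Wr.mul x ⟨1, 1, 0⟩ = x
    obtain ⟨a, b, c⟩ := x
    obtain rfl | rfl : c = 0 ∨ c = 1 := (by decide : ∀ j : ZMod 2, j = 0 ∨ j = 1) c <;> simp [Wr.mul]
  inv_mul_cancel x := by
    show Wr.mul (Wr.inv x) x = ⟨1, 1, 0⟩
    obtain ⟨a, b, c⟩ := x
    obtain rfl | rfl : c = 0 ∨ c = 1 := (by decide : ∀ j : ZMod 2, j = 0 ∨ j = 1) c <;> simp [Wr.mul, Wr.inv, show (1 : ZMod 2) ≠ 0 by decide,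
      show (1 + 1 : ZMod 2) = 0 by decide]

/-- An involutive swap: an element of the form `(g, g⁻¹, 1)`. -/
def IsSwap (k : Wr n) : Prop := ∃ g : Equiv.Perm (Fin n), k = ⟨g, g⁻¹, 1⟩

/-- The faithful action of `S_n ≀ S_2` on `Fin n ⊕ Fin n`:
`ι(σ,τ,0)` maps `inl i ↦ inl (σ i)`, `inr i ↦ inr (τ i)`, while
`ι(σ,τ,1)` maps `inl i ↦ inr (τ i)`, `inr i ↦ inl (σ i)`. -/
def iota : Wr n →* Equiv.Perm (Fin n ⊕ Fin n) where
  toFun x := Equiv.sumCongr x.fst x.snd *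
    (if x.bit = 0 then 1 else Equiv.sumComm (Fin n) (Fin n))
  map_one' := by
    simp [show ((1 : Wr n)).bit = 0 from rfl, show ((1 : Wr n)).fst = 1 from rfl,
      show ((1 : Wr n)).snd = 1 from rfl]
  map_mul' x y := by
    have hxy : x * y = Wr.mul x y := rfl
    obtain ⟨a, b, c⟩ := x; obtain ⟨d, e, f⟩ := y
    rw [hxy]
    obtain rfl | rfl : c = 0 ∨ c = 1 := (by decide : ∀ j : ZMod 2, j = 0 ∨ j = 1) c <;> obtain rfl | rfl : f = 0 ∨ f = 1 := (by decide : ∀ j : ZMod 2, j = 0 ∨ j = 1) f <;>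
      · ext u
        rcases u with u | u <;>
          simp [Wr.mul, show (1 : ZMod 2) ≠ 0 by decide,
            show (1 + 1 : ZMod 2) = 0 by decide, Equiv.Perm.mul_apply]

end Wr

/-- The Hilbert space `ℂ[G^m]`. -/
abbrev GIHilb (n m : ℕ) : Type := EuclideanSpace ℂ (Fin m → Wr n)

noncomputable section

namespace Wr

/-- The `k`-vector associated to `c ∈ G^m`:
`x ↦ 2^{-m/2} ∏_i [x i ∈ {c i, c i * k}]`. -/
def kvec (n m : ℕ) (k : Wr n) (c : Fin m → Wr n) : GIHilb n m :=
  (WithLp.equiv 2 _).symm fun x =>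
    ((Real.sqrt (2 ^ m) : ℝ)⁻¹ : ℂ) *
      ∏ i, (if x i = c i ∨ x i = c i * k then (1 : ℂ) else 0)

/-- `ℋ(k)`: the span of all `k`-vectors. -/
def kSpace (n m : ℕ) (k : Wr n) : Submodule ℂ (GIHilb n m) :=
  Submodule.span ℂ (Set.range (kvec n m k))

/-- `ℋ₁ = ∑_k ℋ(k)`, the sum over all involutive swaps `k`. -/
def H1 (n m : ℕ) : Submodule ℂ (GIHilb n m) :=
  ⨆ k ∈ {k : Wr n | IsSwap k}, kSpace n m k

/-- The tensor product of coset states of the subgroup `H` with coset representatives `c`: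
`x ↦ |H|^{-m/2} ∏_i [x i ∈ c i H]`. -/
def cosetState {n : ℕ} (H : Subgroup (Wr n)) (m : ℕ) (c : Fin m → Wr n) : GIHilb n m :=
  (WithLp.equiv 2 _).symm fun x =>
    ((Real.sqrt ((Nat.card H : ℝ) ^ m))⁻¹ : ℂ) *
      ∏ i, (if (c i)⁻¹ * x i ∈ H then (1 : ℂ) else 0)

end Wr

/-- The subgroup of `S_n ≀ S_2` of elements acting (via `ι`) as automorphisms of the graph `Γ`. -/
def autSubgroup {n : ℕ} (Γ : SimpleGraph (Fin n ⊕ Fin n)) : Subgroup (Wr n) where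
  carrier := {h | ∀ u v, Γ.Adj (Wr.iota h u) (Wr.iota h v) ↔ Γ.Adj u v}
  one_mem' := by intro u v; simp
  mul_mem' := by
    intro a b ha hb u v
    rw [map_mul, Equiv.Perm.mul_apply, Equiv.Perm.mul_apply, ha, hb]
  inv_mem' := by
    intro a ha u v
    have := ha ((Wr.iota a)⁻¹ u) ((Wr.iota a)⁻¹ v)
    simpa [map_inv] using this.symm

end


/-!
If `φ : Γ₁ ≃g Γ₂`, then `k = (φ⁻¹, φ, 1)` is an involutive swap lying in `H`. Each left coset
`c H` is then the disjoint union of the pairs `{g, g k}`, so `ψ_c`, a tensor product of coset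
indicators, is a linear combination of `k`-vectors: `ψ_c ∈ ℋ(k) ⊆ ℋ₁`. As `‖ψ_c‖ = 1`, this gives
`⟪ψ_c, P₁ ψ_c⟫ = 1`.

If the graphs are not isomorphic, no element of `H` exchanges the two copies, so `H` lies in the
kernel of the sign character `χ(σ, τ, b) = (-1)^b`. The vector `χ^{⊗m}` is orthogonal to every
`k`-vector (the pair `{g, g k}` carries opposite signs), hence to `ℋ₁`, but not to `ψ_c`, since
`χ` is constant on each coset `c i H`. So `ψ_c ∉ ℋ₁`, which for a unit vector means
`⟪ψ_c, P₁ ψ_c⟫ ≠ 1`.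
-/

section Projection

variable {𝕜 E : Type*} [RCLike 𝕜] [NormedAddCommGroup E] [InnerProductSpace 𝕜 E]

theorem Submodule.inner_starProjection_eq_one_iff (K : Submodule 𝕜 E) [K.HasOrthogonalProjection]
    {v : E} (hv : ‖v‖ = 1) : inner 𝕜 v (K.starProjection v) = 1 ↔ v ∈ K := by
  refine ⟨fun h => ?_, fun h => ?_⟩
  · have hP : ‖K.orthogonalProjectionOnto v‖ ^ 2 = 1 := by
      rw [← K.re_inner_starProjection_eq_normSq, K.inner_starProjection_left_eq_right, h,
        RCLike.one_re]
    have hPerp : ‖Kᗮ.orthogonalProjectionOnto v‖ ^ 2 = 0 := by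
      have := norm_sq_eq_add_norm_sq_projection v K
      rw [hv, hP] at this
      linarith
    rwa [sq_eq_zero_iff, norm_eq_zero, orthogonalProjectionOnto_eq_zero_iff,
      K.orthogonal_orthogonal] at hPerp
  · rw [K.starProjection_eq_self_iff.mpr h, inner_self_eq_norm_sq_to_K, hv]
    simp

end Projection

section TensorVec

variable {ι α β : Type*} [Fintype ι]

def tensorVec (F : ι → α → ℂ) : EuclideanSpace ℂ (ι → α) :=
  WithLp.toLp 2 fun x => ∏ i, F i (x i)

@[simp]
theorem tensorVec_apply (F : ι → α → ℂ) (x : ι → α) : tensorVec F x = ∏ i, F i (x i) := rfl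

theorem inner_tensorVec [DecidableEq ι] [Fintype α] (F G : ι → α → ℂ) :
    inner ℂ (tensorVec F) (tensorVec G) = ∏ i, ∑ a, starRingEnd ℂ (F i a) * G i a := by
  rw [Finset.prod_univ_sum, Fintype.piFinset_univ, PiLp.inner_apply]
  simp [Finset.prod_mul_distrib, mul_comm]

theorem tensorVec_const_mul (r : ℂ) (F : ι → α → ℂ) :
    tensorVec (fun i a => r * F i a) = r ^ Fintype.card ι • tensorVec F := by
  ext x
  simp [Finset.prod_mul_distrib]

theorem sum_piFinset_tensorVec [DecidableEq ι] [DecidableEq β] (S : ι → Finset β)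
    (F : ι → β → α → ℂ) :
    ∑ d ∈ Fintype.piFinset S, tensorVec (fun i => F i (d i)) =
      tensorVec fun i a => ∑ b ∈ S i, F i b a := by
  ext x
  simp [Finset.prod_univ_sum]

end TensorVec

section CosetSums

variable {G : Type*} [Group G] [Fintype G]

theorem sum_ite_inv_mul_mem (H : Subgroup G) [DecidablePred (· ∈ H)] (c : G) :
    ∑ g, (if c⁻¹ * g ∈ H then (1 : ℂ) else 0) = Nat.card H := by
  rw [← Equiv.sum_comp (Equiv.mulLeft c), Finset.sum_boole, Nat.card_eq_fintype_card,
    Fintype.card_subtype]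
  simp

theorem sum_ite_inv_mul_mem_mul_char (H : Subgroup G) [DecidablePred (· ∈ H)] (χ : G →* ℂ)
    (hH : H ≤ χ.ker) (c : G) :
    ∑ g, (if c⁻¹ * g ∈ H then (1 : ℂ) else 0) * χ g = χ c * Nat.card H := by
  have hχ : ∀ g, (if c⁻¹ * g ∈ H then (1 : ℂ) else 0) * χ g =
      χ c * if c⁻¹ * g ∈ H then 1 else 0 := by
    intro g
    split_ifs with hg
    · rw [← mul_inv_cancel_left c g, map_mul, hH hg, one_mul, mul_one]
    · simp
  rw [Finset.sum_congr rfl fun g _ => hχ g, ← Finset.mul_sum, sum_ite_inv_mul_mem]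

theorem sum_ite_eq_or_eq_mul_mul_char [DecidableEq G] (χ : G →* ℂ) {k : G} (hk : χ k = -1)
    (d : G) :
    ∑ g, (if g = d ∨ g = d * k then (1 : ℂ) else 0) * χ g = 0 := by
  have hne : d ≠ d * k := fun h => by
    have : χ k = 1 := by rw [left_eq_mul.mp h, map_one]
    norm_num [hk] at this
  have hpair : ({g | g = d ∨ g = d * k} : Finset G) = {d, d * k} := by ext; simp
  simp_rw [ite_mul, one_mul, zero_mul]
  rw [← Finset.sum_filter, hpair, Finset.sum_pair hne, map_mul, hk]
  ring

theorem sum_filter_inv_mul_mem_ite_eq_or_eq_mul [DecidableEq G] (H : Subgroup G)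
    [DecidablePred (· ∈ H)] {k : G} (hkH : k ∈ H) (hk : k ≠ 1) (c x : G) :
    ∑ g with c⁻¹ * g ∈ H, (if x = g ∨ x = g * k then (1 : ℂ) else 0) =
      2 * if c⁻¹ * x ∈ H then 1 else 0 := by
  have hne : x ≠ x * k⁻¹ := by simpa using hk
  have hmem : c⁻¹ * (x * k⁻¹) ∈ H ↔ c⁻¹ * x ∈ H := by
    rw [← mul_assoc, H.mul_mem_cancel_right (H.inv_mem hkH)]
  have hpair : ({g | c⁻¹ * g ∈ H ∧ (x = g ∨ x = g * k)} : Finset G) =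
      if c⁻¹ * x ∈ H then {x, x * k⁻¹} else ∅ := by
    ext g
    rw [Finset.mem_filter, eq_comm (a := x), eq_comm (a := x), ← eq_mul_inv_iff_mul_eq]
    split_ifs with hx <;> aesop
  rw [Finset.sum_boole, Finset.filter_filter, hpair]
  split_ifs
  · rw [Finset.card_pair hne]; norm_num
  · simp

end CosetSums

namespace Wr

variable {n : ℕ}

theorem bit_mul (x y : Wr n) : (x * y).bit = x.bit + y.bit := rfl

def sign : Wr n →* ℂ where
  toFun x := (-1) ^ x.bit.val
  map_one' := pow_zero _
  map_mul' x y := by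
    rw [bit_mul, ZMod.val_add, ← neg_one_pow_eq_pow_mod_two, pow_add]

theorem mem_ker_sign {h : Wr n} : h ∈ sign.ker ↔ h.bit = 0 := by
  change (-1 : ℂ) ^ h.bit.val = 1 ↔ _
  rw [neg_one_pow_eq_one_iff_even (by norm_num), ← ZMod.natCast_eq_zero_iff_even,
    ZMod.natCast_zmod_val]

theorem sign_eq_neg_one_of_isSwap {k : Wr n} (hk : IsSwap k) : sign k = -1 := by
  obtain ⟨g, rfl⟩ := hk
  exact pow_one _

theorem ne_one_of_isSwap {k : Wr n} (hk : IsSwap k) : k ≠ 1 := by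
  intro h
  have := sign_eq_neg_one_of_isSwap hk
  rw [h, map_one] at this
  norm_num at this

theorem iota_inl_of_bit_ne_zero {h : Wr n} (hb : h.bit ≠ 0) (i : Fin n) :
    iota h (Sum.inl i) = Sum.inr (h.snd i) := by
  simp [iota, hb]

theorem iota_inr_of_bit_ne_zero {h : Wr n} (hb : h.bit ≠ 0) (i : Fin n) :
    iota h (Sum.inr i) = Sum.inl (h.fst i) := by
  simp [iota, hb]

end Wr

section AutSubgroup

variable {n : ℕ} {Γ₁ Γ₂ : SimpleGraph (Fin n)}

def isoOfMemAutSubgroup {h : Wr n} (hmem : h ∈ autSubgroup (Γ₁ ⊕g Γ₂)) (hb : h.bit ≠ 0) :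
    Γ₁ ≃g Γ₂ :=
  ⟨h.snd, fun {i j} => by
    simpa [Wr.iota_inl_of_bit_ne_zero hb] using hmem (.inl i) (.inl j)⟩

theorem autSubgroup_le_ker_sign (h : IsEmpty (Γ₁ ≃g Γ₂)) :
    autSubgroup (Γ₁ ⊕g Γ₂) ≤ Wr.sign.ker := fun _ hg =>
  Wr.mem_ker_sign.mpr (Classical.byContradiction fun hb => h.false (isoOfMemAutSubgroup hg hb))

theorem exists_isSwap_mem_autSubgroup (φ : Γ₁ ≃g Γ₂) :
    ∃ k : Wr n, k.IsSwap ∧ k ∈ autSubgroup (Γ₁ ⊕g Γ₂) := by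
  let e : Equiv.Perm (Fin n) := φ.toEquiv
  refine ⟨⟨e⁻¹, e, 1⟩, ⟨e⁻¹, by rw [inv_inv]⟩, ?_⟩
  have hb : (⟨e⁻¹, e, 1⟩ : Wr n).bit ≠ 0 := one_ne_zero
  rintro (i | i) (j | j) <;>
    simp [Wr.iota_inl_of_bit_ne_zero hb, Wr.iota_inr_of_bit_ne_zero hb, e, φ.map_adj_iff]
  exact φ.symm.map_adj_iff

end AutSubgroup

namespace Wr

variable {n m : ℕ}

theorem kvec_eq_smul_tensorVec (k : Wr n) (c : Fin m → Wr n) :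
    kvec n m k c = ((√(2 ^ m) : ℝ)⁻¹ : ℂ) •
      tensorVec fun i g => if g = c i ∨ g = c i * k then 1 else 0 := rfl

theorem cosetState_eq_smul_tensorVec (H : Subgroup (Wr n)) (c : Fin m → Wr n) :
    cosetState H m c = ((√((Nat.card H : ℝ) ^ m) : ℝ)⁻¹ : ℂ) •
      tensorVec fun i g => if (c i)⁻¹ * g ∈ H then 1 else 0 := rfl

def signTensor (n m : ℕ) : GIHilb n m := tensorVec fun _ : Fin m => ⇑(sign : Wr n →* ℂ)

theorem kSpace_le_H1 {k : Wr n} (hk : IsSwap k) : kSpace n m k ≤ H1 n m :=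
  le_iSup₂ (f := fun k (_ : k ∈ {k : Wr n | IsSwap k}) => kSpace n m k) k hk

theorem inner_kvec_signTensor (hm : 0 < m) {k : Wr n} (hk : IsSwap k) (d : Fin m → Wr n) :
    inner ℂ (kvec n m k d) (signTensor n m) = 0 := by
  rw [kvec_eq_smul_tensorVec, signTensor, inner_smul_left, inner_tensorVec,
    Finset.prod_eq_zero (Finset.mem_univ ⟨0, hm⟩), mul_zero]
  simp only [apply_ite (starRingEnd ℂ), map_one, map_zero]
  exact sum_ite_eq_or_eq_mul_mul_char sign (sign_eq_neg_one_of_isSwap hk) _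

theorem H1_le_orthogonal_signTensor (hm : 0 < m) : H1 n m ≤ (ℂ ∙ signTensor n m)ᗮ := by
  refine iSup₂_le fun k hk => Submodule.span_le.mpr ?_
  rintro _ ⟨d, rfl⟩
  exact Submodule.mem_orthogonal_singleton_iff_inner_left.mpr (inner_kvec_signTensor hm hk d)

theorem inner_cosetState_signTensor_ne_zero {H : Subgroup (Wr n)} (hH : H ≤ sign.ker)
    (c : Fin m → Wr n) : inner ℂ (cosetState H m c) (signTensor n m) ≠ 0 := by
  rw [cosetState_eq_smul_tensorVec, signTensor, inner_smul_left, inner_tensorVec]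
  simp only [apply_ite (starRingEnd ℂ), map_one, map_zero,
    sum_ite_inv_mul_mem_mul_char H sign hH]
  have hcard : (Nat.card H : ℂ) ≠ 0 := Nat.cast_ne_zero.mpr Nat.card_pos.ne'
  refine mul_ne_zero (by simp) (Finset.prod_ne_zero_iff.mpr fun i _ => ?_)
  exact mul_ne_zero (pow_ne_zero _ (by norm_num)) hcard

theorem norm_cosetState (H : Subgroup (Wr n)) (c : Fin m → Wr n) : ‖cosetState H m c‖ = 1 := by
  have hψ : inner ℂ (cosetState H m c) (cosetState H m c) = 1 := by
    rw [cosetState_eq_smul_tensorVec, inner_smul_left, inner_smul_right, inner_tensorVec]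
    simp only [apply_ite (starRingEnd ℂ), map_one, map_zero, ite_mul, one_mul, zero_mul,
      ← ite_and, and_self, sum_ite_inv_mul_mem]
    rw [Finset.prod_const, Finset.card_univ, Fintype.card_fin, map_inv₀, Complex.conj_ofReal,
      ← mul_assoc, ← mul_inv, ← Complex.ofReal_mul, Real.mul_self_sqrt (by positivity)]
    push_cast
    exact inv_mul_cancel₀ (by simp)
  rw [inner_self_eq_norm_sq_to_K, ← RCLike.ofReal_pow, ← RCLike.ofReal_one,
    RCLike.ofReal_inj] at hψ
  exact (pow_eq_one_iff_of_nonneg (norm_nonneg _) two_ne_zero).mp hψ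

theorem cosetState_mem_kSpace {H : Subgroup (Wr n)} {k : Wr n} (hk : IsSwap k) (hkH : k ∈ H)
    (c : Fin m → Wr n) : cosetState H m c ∈ kSpace n m k := by
  have hpair (d : Fin m → Wr n) :
      tensorVec (fun i g => if g = d i ∨ g = d i * k then (1 : ℂ) else 0) ∈ kSpace n m k := by
    refine (Submodule.smul_mem_iff _ (by simp : ((√(2 ^ m) : ℝ)⁻¹ : ℂ) ≠ 0)).mp ?_
    rw [← kvec_eq_smul_tensorVec]
    exact Submodule.subset_span ⟨d, rfl⟩
  have hsum : (2 : ℂ) ^ m • tensorVec (fun i g => if (c i)⁻¹ * g ∈ H then (1 : ℂ) else 0) =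
      ∑ d ∈ Fintype.piFinset fun i => ({g | (c i)⁻¹ * g ∈ H} : Finset (Wr n)),
        tensorVec fun i g => if g = d i ∨ g = d i * k then (1 : ℂ) else 0 := by
    have h2 := tensorVec_const_mul (2 : ℂ) fun i g => if (c i)⁻¹ * g ∈ H then (1 : ℂ) else 0
    rw [Fintype.card_fin] at h2
    rw [sum_piFinset_tensorVec _ fun i b g => if g = b ∨ g = b * k then (1 : ℂ) else 0, ← h2]
    congr
    funext i g
    exact (sum_filter_inv_mul_mem_ite_eq_or_eq_mul H hkH (ne_one_of_isSwap hk) (c i) g).symm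
  rw [cosetState_eq_smul_tensorVec]
  refine Submodule.smul_mem _ _ ((Submodule.smul_mem_iff _ (pow_ne_zero m (two_ne_zero' ℂ))).mp ?_)
  rw [hsum]
  exact Submodule.sum_mem _ fun d _ => hpair d

end Wr

open scoped ComplexOrder

theorem iso_iff_inner_proj_H1_eq_one_general
    (n m : ℕ) (hm : 0 < m)
    (Γ₁ Γ₂ : SimpleGraph (Fin n))
    (c : Fin m → Wr n) :
    Nonempty (Γ₁ ≃g Γ₂) ↔
      inner (𝕜 := ℂ) (Wr.cosetState (autSubgroup (Γ₁ ⊕g Γ₂)) m c)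
        (((Wr.H1 n m).orthogonalProjectionOnto
          (Wr.cosetState (autSubgroup (Γ₁ ⊕g Γ₂)) m c) : GIHilb n m)) = 1 := by
  rw [← Submodule.starProjection_apply,
    Submodule.inner_starProjection_eq_one_iff _ (Wr.norm_cosetState _ c)]
  constructor
  · rintro ⟨φ⟩
    obtain ⟨k, hk, hkH⟩ := exists_isSwap_mem_autSubgroup φ
    exact Wr.kSpace_le_H1 hk (Wr.cosetState_mem_kSpace hk hkH c)
  · intro hψ
    by_contra hiso
    refine Wr.inner_cosetState_signTensor_ne_zero
      (autSubgroup_le_ker_sign (not_nonempty_iff.mp hiso)) c ?_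
    exact Submodule.mem_orthogonal_singleton_iff_inner_left.mp
      (Wr.H1_le_orthogonal_signTensor hm hψ)

/-- If `2^m > n!`, then `Γ₁` and `Γ₂` are isomorphic if and only if the tensor product of coset
states `ψ_c` of the automorphism subgroup satisfies `⟪ψ_c, P₁ ψ_c⟫ = 1`. -/
theorem iso_iff_inner_proj_H1_eq_one
    (n m : ℕ) (hn : 0 < n) (hm : 0 < m) (hnm : n.factorial < 2 ^ m)
    (Γ₁ Γ₂ : SimpleGraph (Fin n))
    (c : Fin m → Wr n) :
    Nonempty (Γ₁ ≃g Γ₂) ↔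
      inner (𝕜 := ℂ) (Wr.cosetState (autSubgroup (Γ₁ ⊕g Γ₂)) m c)
        (((Wr.H1 n m).orthogonalProjectionOnto
          (Wr.cosetState (autSubgroup (Γ₁ ⊕g Γ₂)) m c) : GIHilb n m)) = 1 :=
  iso_iff_inner_proj_H1_eq_one_general n m hm Γ₁ Γ₂ c
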